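/- For every symmetric 3×3 real matrix R there exists an orthogonal 3×3 real matrix A such that all three diagonal entries of A * R * Aᵀ are equal (hence each equals trace(R)/3). -/

import Mathlib

/-!
The diagonal entries of `A * R * Aᵀ` are the values of the quadratic form `x ↦ x ⬝ᵥ R *ᵥ x` on
the rows of `A`, and they sum to the trace of `R`. If they are not all equal to their mean `d`,
one lies strictly below `d` and another strictly above. Rotating the plane spanned by these two
rows moves the first value continuously to the second, so by the intermediate value theorem some
rotation makes it equal to `d` while fixing every other row. Each such rotation strictly
decreases the number of diagonal entries different from `d`.
-/

open Matrix Set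
open scoped Finset

lemma exists_cos_sin_quadratic_eq {p q r d : ℝ} (hd : d ∈ uIcc p r) :
    ∃ c s : ℝ, c ^ 2 + s ^ 2 = 1 ∧ c ^ 2 * p + c * s * q + s ^ 2 * r = d := by
  let f : ℝ → ℝ := fun θ ↦
    Real.cos θ ^ 2 * p + Real.cos θ * Real.sin θ * q + Real.sin θ ^ 2 * r
  have hf : ContinuousOn f (uIcc 0 (Real.pi / 2)) := by fun_prop
  obtain ⟨θ, -, hθ⟩ := intermediate_value_uIcc hf (by simpa [f] using hd)
  exact ⟨Real.cos θ, Real.sin θ, Real.cos_sq_add_sin_sq θ, hθ⟩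

lemma exists_ne_and_mem_uIcc {ι : Type*} [Fintype ι] (x : ι → ℝ) {d : ℝ}
    (hsum : ∑ k, x k = Fintype.card ι * d) {i : ι} (hi : x i ≠ d) :
    ∃ j, x j ≠ d ∧ d ∈ uIcc (x i) (x j) := by
  by_contra! h
  have hconst : ∑ _k : ι, d = Fintype.card ι * d := by simp
  rcases hi.lt_or_gt with hlt | hgt
  · have hle : ∀ k, x k ≤ d := fun k ↦ by
      by_contra! hk
      exact h k hk.ne' (Set.mem_uIcc_of_le hlt.le hk.le)
    have := Finset.sum_lt_sum (fun k _ ↦ hle k) ⟨i, Finset.mem_univ i, hlt⟩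
    linarith
  · have hge : ∀ k, d ≤ x k := fun k ↦ by
      by_contra! hk
      exact h k hk.ne (Set.mem_uIcc_of_ge hk.le hgt.le)
    have := Finset.sum_lt_sum (fun k _ ↦ hge k) ⟨i, Finset.mem_univ i, hgt⟩
    linarith

lemma mul_mul_transpose_apply_self {n : Type*} [Fintype n] (A M : Matrix n n ℝ) (k : n) :
    (A * M * Aᵀ) k k = A k ⬝ᵥ M *ᵥ A k := by
  rw [mul_mul_apply, transpose_transpose]

section Givens

variable {n : Type*} [DecidableEq n]

def givensRotation (i j : n) (c s : ℝ) : Matrix n n ℝ :=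
  Matrix.of fun k ↦
    if k = i then c • Pi.single i 1 + s • Pi.single j 1
    else if k = j then -s • Pi.single i 1 + c • Pi.single j 1
    else Pi.single k 1

variable {i j : n} (c s : ℝ)

lemma givensRotation_row_left :
    givensRotation i j c s i = c • Pi.single i 1 + s • Pi.single j 1 :=
  if_pos rfl

lemma givensRotation_row_right (hij : i ≠ j) :
    givensRotation i j c s j = -s • Pi.single i 1 + c • Pi.single j 1 :=
  (if_neg hij.symm).trans (if_pos rfl)

lemma givensRotation_row_of_ne {k : n} (hki : k ≠ i) (hkj : k ≠ j) :
    givensRotation i j c s k = Pi.single k 1 :=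
  (if_neg hki).trans (if_neg hkj)

variable [Fintype n]

lemma givensRotation_mul_transpose (hij : i ≠ j) {c s : ℝ} (hcs : c ^ 2 + s ^ 2 = 1) :
    givensRotation i j c s * (givensRotation i j c s)ᵀ = 1 := by
  ext k l
  change givensRotation i j c s k ⬝ᵥ givensRotation i j c s l = _
  have hji := hij.symm
  by_cases hki : k = i <;> by_cases hkj : k = j <;> by_cases hli : l = i <;>
    by_cases hlj : l = j <;> subst_vars <;>
    simp_all [givensRotation_row_left, givensRotation_row_right, givensRotation_row_of_ne,
      dotProduct_add, one_apply, Pi.single_apply] <;>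
    grind

lemma givensRotation_conj_apply_left (M : Matrix n n ℝ) :
    (givensRotation i j c s * M * (givensRotation i j c s)ᵀ) i i =
      c ^ 2 * M i i + c * s * (M i j + M j i) + s ^ 2 * M j j := by
  rw [mul_mul_transpose_apply_self, givensRotation_row_left]
  simp [add_dotProduct, dotProduct_add, mulVec_add, mulVec_smul]
  ring

lemma givensRotation_conj_apply_of_ne {k : n} (hki : k ≠ i) (hkj : k ≠ j) (M : Matrix n n ℝ) :
    (givensRotation i j c s * M * (givensRotation i j c s)ᵀ) k k = M k k := by
  rw [mul_mul_transpose_apply_self, givensRotation_row_of_ne c s hki hkj]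
  simp

end Givens

variable {n : Type*} [Fintype n] [DecidableEq n]

lemma trace_mul_mul_transpose_of_transpose_mul_self {A : Matrix n n ℝ} (hA : Aᵀ * A = 1)
    (M : Matrix n n ℝ) : (A * M * Aᵀ).trace = M.trace := by
  rw [trace_mul_cycle, hA, Matrix.one_mul]

lemma exists_orthogonal_conj_apply_eq {i j : n} (hij : i ≠ j) (M : Matrix n n ℝ) {d : ℝ}
    (hd : d ∈ uIcc (M i i) (M j j)) :
    ∃ G : Matrix n n ℝ, Gᵀ * G = 1 ∧ (G * M * Gᵀ) i i = d ∧
      ∀ k, k ≠ i → k ≠ j → (G * M * Gᵀ) k k = M k k := by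
  obtain ⟨c, s, hcs, hd⟩ := exists_cos_sin_quadratic_eq (q := M i j + M j i) hd
  refine ⟨givensRotation i j c s, mul_eq_one_comm.mp (givensRotation_mul_transpose hij hcs),
    ?_, fun k hki hkj ↦ givensRotation_conj_apply_of_ne c s hki hkj M⟩
  rw [givensRotation_conj_apply_left, hd]

lemma exists_orthogonal_conj_card_diag_ne_lt (M : Matrix n n ℝ) {d : ℝ}
    (hM : M.trace = Fintype.card n * d) {i : n} (hi : M i i ≠ d) :
    ∃ G : Matrix n n ℝ, Gᵀ * G = 1 ∧ #{k | (G * M * Gᵀ) k k ≠ d} < #{k | M k k ≠ d} := by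
  obtain ⟨j, hj, hd⟩ := exists_ne_and_mem_uIcc (fun k ↦ M k k) hM hi
  have hij : i ≠ j := by
    rintro rfl
    exact hi (by simpa using hd : d = M i i).symm
  obtain ⟨G, hG, hGi, hGk⟩ := exists_orthogonal_conj_apply_eq hij M hd
  have hsub : ({k | (G * M * Gᵀ) k k ≠ d} : Finset n) ⊆ ({k | M k k ≠ d} : Finset n).erase i := by
    intro k hk
    simp only [Finset.mem_filter, Finset.mem_univ, true_and, Finset.mem_erase] at hk ⊢
    have hki : k ≠ i := fun hki ↦ hk (hki ▸ hGi)
    refine ⟨hki, ?_⟩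
    by_cases hkj : k = j
    · exact hkj ▸ hj
    · exact hGk k hki hkj ▸ hk
  refine ⟨G, hG, (Finset.card_le_card hsub).trans_lt (Finset.card_erase_lt_of_mem ?_)⟩
  simpa using hi

theorem exists_orthogonal_conj_diag_eq (M : Matrix n n ℝ) {d : ℝ}
    (hM : M.trace = Fintype.card n * d) :
    ∃ A : Matrix n n ℝ, Aᵀ * A = 1 ∧ ∀ k, (A * M * Aᵀ) k k = d := by
  induction hm : #{k | M k k ≠ d} using Nat.strong_induction_on generalizing M with
  | _ m ih =>
  by_cases hconst : ∀ k, M k k = d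
  · exact ⟨1, by simp, by simpa using hconst⟩
  obtain ⟨i, hi⟩ := not_forall.mp hconst
  obtain ⟨G, hG, hfewer⟩ := exists_orthogonal_conj_card_diag_ne_lt M hM hi
  obtain ⟨A, hA, hAd⟩ := ih _ (hm ▸ hfewer) (G * M * Gᵀ)
    (by rw [trace_mul_mul_transpose_of_transpose_mul_self hG, hM]) rfl
  refine ⟨A * G, ?_, fun k ↦ ?_⟩
  · rw [transpose_mul, Matrix.mul_assoc, ← Matrix.mul_assoc Aᵀ, hA, Matrix.one_mul, hG]
  · rw [← hAd k, transpose_mul]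
    simp only [Matrix.mul_assoc]

theorem stmt7_general (R : Matrix (Fin 3) (Fin 3) ℝ) :
    ∃ A : Matrix (Fin 3) (Fin 3) ℝ, Aᵀ * A = 1 ∧
      ∀ i, (A * R * Aᵀ) i i = Matrix.trace R / 3 :=
  exists_orthogonal_conj_diag_eq R (by rw [Fintype.card_fin]; push_cast; ring)

/-- Every symmetric `3 × 3` real matrix can be orthogonally conjugated so that all its
diagonal entries are equal (to one third of the trace). -/
theorem stmt7 (R : Matrix (Fin 3) (Fin 3) ℝ) (hR : Rᵀ = R) :
    ∃ A : Matrix (Fin 3) (Fin 3) ℝ, Aᵀ * A = 1 ∧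
      ∀ i, (A * R * Aᵀ) i i = Matrix.trace R / 3 :=
  stmt7_general R
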